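/- arXiv:math/0509052 — 6 statements merged into one kernel-verified Lean document; each statement's English description precedes it below -/
import Mathlib

section
/- Given a matched pair of groupoids (H, V, ▷, ◁) on a common base P, the set D = V ×_{e,s} H of pairs (g,x) with e(g) = s(x), equipped with s(g,x) = s(g), e(g,x) = e(x), product (g,x)(h,y) = (g(x▷h), (x◁h)y) (defined when e(x) = s(h)), identities id_P = (id_P, id_P), is a groupoid. -/
universe u v w

/-- An (algebraic) groupoid on a base `P` with set of arrows `G`.  The composition
`mul g h` (written `gh`, "first `g`, then `h`") is subject to axioms only when
`t g = s h`; its values on non-composable pairs are irrelevant. -/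
structure Gpd (P : Type u) (G : Type v) where
  s : G → P
  t : G → P
  one : P → G
  inv : G → G
  mul : G → G → G
  s_one : ∀ p, s (one p) = p
  t_one : ∀ p, t (one p) = p
  s_mul : ∀ g h, t g = s h → s (mul g h) = s g
  t_mul : ∀ g h, t g = s h → t (mul g h) = t h
  mul_assoc : ∀ g h i, t g = s h → t h = s i → mul (mul g h) i = mul g (mul h i)
  one_mul : ∀ g, mul (one (s g)) g = g
  mul_one : ∀ g, mul g (one (t g)) = g
  s_inv : ∀ g, s (inv g) = t g
  t_inv : ∀ g, t (inv g) = s g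
  mul_inv : ∀ g, mul g (inv g) = one (s g)
  inv_mul : ∀ g, mul (inv g) g = one (t g)

/-- A matched pair of groupoids `(H, V, ▷, ◁)` on a common base `P`:
`act x g = x ▷ g` and `coact x g = x ◁ g`, defined (i.e. subject to axioms) when
`t x = s g`. -/
structure MatchedPair (P : Type u) (H : Type v) (V : Type w) where
  GH : Gpd P H
  GV : Gpd P V
  act : H → V → V
  coact : H → V → H
  s_act : ∀ x g, GH.t x = GV.s g → GV.s (act x g) = GH.s x
  t_act : ∀ x g, GH.t x = GV.s g → GV.t (act x g) = GH.s (coact x g)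
  t_coact : ∀ x g, GH.t x = GV.s g → GH.t (coact x g) = GV.t g
  mulH_act : ∀ x y g, GH.t x = GH.s y → GH.t y = GV.s g →
    act (GH.mul x y) g = act x (act y g)
  one_act : ∀ g, act (GH.one (GV.s g)) g = g
  one_coact : ∀ g, coact (GH.one (GV.s g)) g = GH.one (GV.t g)
  coact_mulV : ∀ x g h, GH.t x = GV.s g → GV.t g = GV.s h →
    coact x (GV.mul g h) = coact (coact x g) h
  coact_one : ∀ x, coact x (GV.one (GH.t x)) = x
  act_one : ∀ x, act x (GV.one (GH.t x)) = GV.one (GH.s x)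
  act_mulV : ∀ x g h, GH.t x = GV.s g → GV.t g = GV.s h →
    act x (GV.mul g h) = GV.mul (act x g) (act (coact x g) h)
  coact_mulH : ∀ x y g, GH.t x = GH.s y → GH.t y = GV.s g →
    coact (GH.mul x y) g = GH.mul (coact x (act y g)) (coact y g)

namespace MatchedPair

variable {P : Type u} {H : Type v} {V : Type w} (mp : MatchedPair P H V)

/-- The arrows `V ×_{e,s} H` of the diagonal groupoid `D = V ⋈ H` of a matched pair. -/
def Diag : Type max v w := {q : V × H // mp.GV.t q.1 = mp.GH.s q.2}

end MatchedPair

/-! Each groupoid law of `D` splits into a law of `V` and one of `H`: the `V`-component of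
associativity is `x ▷ (h (y ▷ k)) = (x ▷ h) (((x ◁ h) y) ▷ k)` followed by associativity of `V`,
and dually in `H`.
The inverse comes from the factorisation `(g, x) = (g, 1)(1, x)`, which gives
`(g, x)⁻¹ = (1, x⁻¹)(g⁻¹, 1) = (x⁻¹ ▷ g⁻¹, x⁻¹ ◁ g⁻¹)`. -/

namespace MatchedPair

variable {P : Type u} {H : Type v} {V : Type w} (mp : MatchedPair P H V)

local notation:70 x:71 " ▷ " g:70 => MatchedPair.act mp x g
local notation:70 x:70 " ◁ " g:71 => MatchedPair.coact mp x g

section Identities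

variable {x y : H} {g h k : V}

theorem act_mul_act (hxh : mp.GH.t x = mp.GV.s h) (hhy : mp.GV.t h = mp.GH.s y)
    (hyk : mp.GH.t y = mp.GV.s k) :
    x ▷ mp.GV.mul h (y ▷ k) = mp.GV.mul (x ▷ h) (mp.GH.mul (x ◁ h) y ▷ k) := by
  rw [mp.act_mulV x h _ hxh (by rw [mp.s_act _ _ hyk, hhy]),
    mp.mulH_act _ _ _ (by rw [mp.t_coact _ _ hxh, hhy]) hyk]

theorem coact_mul_coact (hxh : mp.GH.t x = mp.GV.s h) (hhy : mp.GV.t h = mp.GH.s y)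
    (hyk : mp.GH.t y = mp.GV.s k) :
    mp.GH.mul (x ◁ h) y ◁ k = mp.GH.mul (x ◁ mp.GV.mul h (y ▷ k)) (y ◁ k) := by
  rw [mp.coact_mulH _ _ _ (by rw [mp.t_coact _ _ hxh, hhy]) hyk,
    mp.coact_mulV x h _ hxh (by rw [mp.s_act _ _ hyk, hhy])]

theorem mul_inv_act (hxg : mp.GH.s x = mp.GV.s g) : mp.GH.mul x (mp.GH.inv x) ▷ g = g := by
  rw [mp.GH.mul_inv, hxg, mp.one_act]

theorem mul_inv_coact (hxg : mp.GH.s x = mp.GV.s g) :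
    mp.GH.mul x (mp.GH.inv x) ◁ g = mp.GH.one (mp.GV.t g) := by
  rw [mp.GH.mul_inv, hxg, mp.one_coact]

theorem act_inv_mul (hxg : mp.GH.t x = mp.GV.t g) :
    x ▷ mp.GV.mul (mp.GV.inv g) g = mp.GV.one (mp.GH.s x) := by
  rw [mp.GV.inv_mul, ← hxg, mp.act_one]

theorem coact_inv_mul (hxg : mp.GH.t x = mp.GV.t g) : x ◁ mp.GV.mul (mp.GV.inv g) g = x := by
  rw [mp.GV.inv_mul, ← hxg, mp.coact_one]

end Identities

section Diagonal

variable {a b c : mp.Diag}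

theorem t_inv_eq_s_inv (a : mp.Diag) :
    mp.GH.t (mp.GH.inv a.1.2) = mp.GV.s (mp.GV.inv a.1.1) := by
  rw [mp.GH.t_inv, mp.GV.s_inv, a.2]

theorem t_mul_act_eq_s_coact_mul (hab : mp.GH.t a.1.2 = mp.GV.s b.1.1) :
    mp.GV.t (mp.GV.mul a.1.1 (a.1.2 ▷ b.1.1)) =
      mp.GH.s (mp.GH.mul (a.1.2 ◁ b.1.1) b.1.2) := by
  rw [mp.GV.t_mul _ _ (by rw [mp.s_act _ _ hab, a.2]),
    mp.GH.s_mul _ _ (by rw [mp.t_coact _ _ hab, b.2]), mp.t_act _ _ hab]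

def diagOne (p : P) : mp.Diag :=
  ⟨(mp.GV.one p, mp.GH.one p), by rw [mp.GV.t_one, mp.GH.s_one]⟩

def diagInv (a : mp.Diag) : mp.Diag :=
  ⟨(mp.GH.inv a.1.2 ▷ mp.GV.inv a.1.1, mp.GH.inv a.1.2 ◁ mp.GV.inv a.1.1),
    mp.t_act _ _ (mp.t_inv_eq_s_inv a)⟩

open Classical in
noncomputable def diagMul (a b : mp.Diag) : mp.Diag :=
  if hab : mp.GH.t a.1.2 = mp.GV.s b.1.1 then
    ⟨(mp.GV.mul a.1.1 (a.1.2 ▷ b.1.1), mp.GH.mul (a.1.2 ◁ b.1.1) b.1.2),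
      mp.t_mul_act_eq_s_coact_mul hab⟩
  else a

theorem val_diagMul (hab : mp.GH.t a.1.2 = mp.GV.s b.1.1) :
    (mp.diagMul a b).1 =
      (mp.GV.mul a.1.1 (a.1.2 ▷ b.1.1), mp.GH.mul (a.1.2 ◁ b.1.1) b.1.2) :=
  congrArg Subtype.val (dif_pos hab)

theorem s_diagMul (hab : mp.GH.t a.1.2 = mp.GV.s b.1.1) :
    mp.GV.s (mp.diagMul a b).1.1 = mp.GV.s a.1.1 := by
  rw [mp.val_diagMul hab]
  exact mp.GV.s_mul _ _ (by rw [mp.s_act _ _ hab, a.2])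

theorem t_diagMul (hab : mp.GH.t a.1.2 = mp.GV.s b.1.1) :
    mp.GH.t (mp.diagMul a b).1.2 = mp.GH.t b.1.2 := by
  rw [mp.val_diagMul hab]
  exact mp.GH.t_mul _ _ (by rw [mp.t_coact _ _ hab, b.2])

theorem diagMul_assoc (hab : mp.GH.t a.1.2 = mp.GV.s b.1.1)
    (hbc : mp.GH.t b.1.2 = mp.GV.s c.1.1) :
    mp.diagMul (mp.diagMul a b) c = mp.diagMul a (mp.diagMul b c) := by
  have hab_c := (mp.t_diagMul hab).trans hbc
  have ha_bc := hab.trans (mp.s_diagMul hbc).symm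
  apply Subtype.ext
  rw [mp.val_diagMul hab_c, mp.val_diagMul ha_bc, mp.val_diagMul hab, mp.val_diagMul hbc]
  obtain ⟨⟨g, x⟩, ha⟩ := a
  obtain ⟨⟨h, y⟩, hb⟩ := b
  obtain ⟨⟨k, z⟩, hc⟩ := c
  dsimp only at *
  have hxh_y : mp.GH.t (x ◁ h) = mp.GH.s y := by rw [mp.t_coact _ _ hab, hb]
  have hh_yk : mp.GV.t h = mp.GV.s (y ▷ k) := by rw [mp.s_act _ _ hbc, hb]
  have hg_xh : mp.GV.t g = mp.GV.s (x ▷ h) := by rw [mp.s_act _ _ hab, ha]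
  have hxh_xhyk : mp.GV.t (x ▷ h) = mp.GV.s (mp.GH.mul (x ◁ h) y ▷ k) := by
    rw [mp.t_act _ _ hab, mp.s_act _ _ (by rw [mp.GH.t_mul _ _ hxh_y, hbc]),
      mp.GH.s_mul _ _ hxh_y]
  have hxhyk_yk : mp.GH.t (x ◁ mp.GV.mul h (y ▷ k)) = mp.GH.s (y ◁ k) := by
    rw [mp.t_coact _ _ (by rw [mp.GV.s_mul _ _ hh_yk, hab]), mp.GV.t_mul _ _ hh_yk,
      mp.t_act _ _ hbc]
  have hyk_z : mp.GH.t (y ◁ k) = mp.GH.s z := by rw [mp.t_coact _ _ hbc, hc]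
  refine Prod.ext ?_ ?_
  · rw [mp.act_mul_act hab hb hbc, mp.GV.mul_assoc _ _ _ hg_xh hxh_xhyk]
  · rw [mp.coact_mul_coact hab hb hbc, mp.GH.mul_assoc _ _ _ hxhyk_yk hyk_z]

theorem diagOne_mul (a : mp.Diag) : mp.diagMul (mp.diagOne (mp.GV.s a.1.1)) a = a := by
  apply Subtype.ext
  rw [mp.val_diagMul (mp.GH.t_one _)]
  dsimp only [diagOne]
  refine Prod.ext ?_ ?_
  · rw [mp.one_act, mp.GV.one_mul]
  · rw [mp.one_coact, a.2, mp.GH.one_mul]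

theorem diagMul_one (a : mp.Diag) : mp.diagMul a (mp.diagOne (mp.GH.t a.1.2)) = a := by
  apply Subtype.ext
  rw [mp.val_diagMul (mp.GV.s_one _).symm]
  dsimp only [diagOne]
  refine Prod.ext ?_ ?_
  · rw [mp.act_one, ← a.2, mp.GV.mul_one]
  · rw [mp.coact_one, mp.GH.mul_one]

theorem s_diagInv (a : mp.Diag) : mp.GV.s (mp.diagInv a).1.1 = mp.GH.t a.1.2 := by
  rw [diagInv, mp.s_act _ _ (mp.t_inv_eq_s_inv a), mp.GH.s_inv]

theorem t_diagInv (a : mp.Diag) : mp.GH.t (mp.diagInv a).1.2 = mp.GV.s a.1.1 := by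
  rw [diagInv, mp.t_coact _ _ (mp.t_inv_eq_s_inv a), mp.GV.t_inv]

theorem diagMul_diagInv (a : mp.Diag) :
    mp.diagMul a (mp.diagInv a) = mp.diagOne (mp.GV.s a.1.1) := by
  apply Subtype.ext
  rw [mp.val_diagMul (mp.s_diagInv a).symm]
  have hinv := mp.t_inv_eq_s_inv a
  obtain ⟨⟨g, x⟩, ha⟩ := a
  dsimp only [diagInv, diagOne] at *
  have hxg : mp.GH.s x = mp.GV.s (mp.GV.inv g) := by rw [mp.GV.s_inv, ha]
  have hx_inv := (mp.GH.s_inv x).symm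
  refine Prod.ext ?_ ?_
  · rw [← mp.mulH_act _ _ _ hx_inv hinv, mp.mul_inv_act hxg, mp.GV.mul_inv]
  · rw [← mp.coact_mulH _ _ _ hx_inv hinv, mp.mul_inv_coact hxg, mp.GV.t_inv]

theorem diagInv_diagMul (a : mp.Diag) :
    mp.diagMul (mp.diagInv a) a = mp.diagOne (mp.GH.t a.1.2) := by
  apply Subtype.ext
  rw [mp.val_diagMul (mp.t_diagInv a)]
  have hinv := mp.t_inv_eq_s_inv a
  obtain ⟨⟨g, x⟩, ha⟩ := a
  dsimp only [diagInv, diagOne] at *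
  have hxg : mp.GH.t (mp.GH.inv x) = mp.GV.t g := by rw [mp.GH.t_inv, ha]
  have hg_inv := mp.GV.t_inv g
  refine Prod.ext ?_ ?_
  · rw [← mp.act_mulV _ _ _ hinv hg_inv, mp.act_inv_mul hxg, mp.GH.s_inv]
  · rw [← mp.coact_mulV _ _ _ hinv hg_inv, mp.coact_inv_mul hxg, mp.GH.inv_mul]

noncomputable def diagGpd : Gpd P mp.Diag where
  s a := mp.GV.s a.1.1
  t a := mp.GH.t a.1.2
  one := mp.diagOne
  inv := mp.diagInv
  mul := mp.diagMul
  s_one := mp.GV.s_one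
  t_one := mp.GH.t_one
  s_mul _ _ := mp.s_diagMul
  t_mul _ _ := mp.t_diagMul
  mul_assoc _ _ _ := mp.diagMul_assoc
  one_mul := mp.diagOne_mul
  mul_one := mp.diagMul_one
  s_inv := mp.s_diagInv
  t_inv := mp.t_diagInv
  mul_inv := mp.diagMul_diagInv
  inv_mul := mp.diagInv_diagMul

end Diagonal

end MatchedPair

/-- for a matched pair of groupoids `(H, V, ▷, ◁)`, the set
`D = V ×_{e,s} H` with `s(g,x) = s(g)`, `e(g,x) = e(x)`, product
`(g,x)(h,y) = (g(x▷h), (x◁h)y)` and identities `(id_P, id_P)` is a groupoid. -/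
theorem diagonal_is_groupoid {P : Type u} {H : Type v} {V : Type w}
    (mp : MatchedPair P H V) :
    ∃ DG : Gpd P mp.Diag,
      (∀ a : mp.Diag, DG.s a = mp.GV.s a.1.1) ∧
      (∀ a : mp.Diag, DG.t a = mp.GH.t a.1.2) ∧
      (∀ p : P, (DG.one p).1 = (mp.GV.one p, mp.GH.one p)) ∧
      (∀ a b : mp.Diag, DG.t a = DG.s b →
        (DG.mul a b).1 =
          (mp.GV.mul a.1.1 (mp.act a.1.2 b.1.1),
           mp.GH.mul (mp.coact a.1.2 b.1.1) b.1.2)) :=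
  ⟨mp.diagGpd, fun _ => rfl, fun _ => rfl, fun _ => rfl, fun _ _ => mp.val_diagMul⟩
end

section
/- The diagonal groupoid D = V ⋈ H of a matched pair of groupoids admits an exact factorization: the maps g ↦ (g, id_{e(g)}) and x ↦ (id_{s(x)}, x) embed V and H as wide subgroupoids of D, and every arrow of D factors uniquely as a product of an arrow of V followed by an arrow of H. -/
universe u v w

namespace MatchedPair

variable {P : Type u} {H : Type v} {V : Type w} (mp : MatchedPair P H V)

/-- The embedding of `V` into the diagonal groupoid, `g ↦ (g, id_{e(g)})`. -/
def iotaV (g : V) : mp.Diag := ⟨(g, mp.GH.one (mp.GV.t g)), (mp.GH.s_one _).symm⟩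

/-- The embedding of `H` into the diagonal groupoid, `x ↦ (id_{s(x)}, x)`. -/
def iotaH (x : H) : mp.Diag := ⟨(mp.GV.one (mp.GH.s x), x), mp.GV.t_one _⟩

end MatchedPair

/-- the diagonal groupoid `D = V ⋈ H` of a matched pair admits an exact
factorization: `g ↦ (g, id)` and `x ↦ (id, x)` embed `V` and `H` as wide subgroupoids
of `D`, and every arrow of `D` factors uniquely as a product of an arrow of `V`
followed by an arrow of `H`. -/
theorem diagonal_exact_factorization {P : Type u} {H : Type v} {V : Type w}
    (mp : MatchedPair P H V) (DG : Gpd P mp.Diag)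
    (hs : ∀ a : mp.Diag, DG.s a = mp.GV.s a.1.1)
    (ht : ∀ a : mp.Diag, DG.t a = mp.GH.t a.1.2)
    (hone : ∀ p : P, (DG.one p).1 = (mp.GV.one p, mp.GH.one p))
    (hmul : ∀ a b : mp.Diag, DG.t a = DG.s b →
      (DG.mul a b).1 =
        (mp.GV.mul a.1.1 (mp.act a.1.2 b.1.1),
         mp.GH.mul (mp.coact a.1.2 b.1.1) b.1.2)) :
    -- `ιV` and `ιH` are injective morphisms of groupoids:
    Function.Injective mp.iotaV ∧ Function.Injective mp.iotaH ∧
    (∀ g : V, DG.s (mp.iotaV g) = mp.GV.s g ∧ DG.t (mp.iotaV g) = mp.GV.t g) ∧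
    (∀ x : H, DG.s (mp.iotaH x) = mp.GH.s x ∧ DG.t (mp.iotaH x) = mp.GH.t x) ∧
    (∀ g h : V, mp.GV.t g = mp.GV.s h →
      DG.mul (mp.iotaV g) (mp.iotaV h) = mp.iotaV (mp.GV.mul g h)) ∧
    (∀ x y : H, mp.GH.t x = mp.GH.s y →
      DG.mul (mp.iotaH x) (mp.iotaH y) = mp.iotaH (mp.GH.mul x y)) ∧
    -- both subgroupoids are wide (they contain all identities):
    (∀ p : P, mp.iotaV (mp.GV.one p) = DG.one p ∧ mp.iotaH (mp.GH.one p) = DG.one p) ∧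
    -- unique factorization `d = ιV(g) · ιH(x)` with `e(g) = s(x)`:
    (∀ d : mp.Diag, ∃! q : mp.Diag, d = DG.mul (mp.iotaV q.1.1) (mp.iotaH q.1.2)) := by

  have keyVH : ∀ q : mp.Diag,
      (DG.mul (mp.iotaV q.1.1) (mp.iotaH q.1.2)).1 = q.1 := by
    intro q
    have hcomp : DG.t (mp.iotaV q.1.1) = DG.s (mp.iotaH q.1.2) := by
      rw [ht, hs]
      simp [MatchedPair.iotaV, MatchedPair.iotaH, mp.GH.t_one, mp.GV.s_one, q.2]
    rw [hmul _ _ hcomp]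
    have h2 : mp.GV.t q.1.1 = mp.GH.s q.1.2 := q.2
    have ha : mp.act (mp.GH.one (mp.GV.t q.1.1)) (mp.GV.one (mp.GH.s q.1.2))
        = mp.GV.one (mp.GH.s q.1.2) := by
      have := mp.one_act (mp.GV.one (mp.GH.s q.1.2))
      rw [mp.GV.s_one] at this
      rw [h2]; exact this
    have hc : mp.coact (mp.GH.one (mp.GV.t q.1.1)) (mp.GV.one (mp.GH.s q.1.2))
        = mp.GH.one (mp.GH.s q.1.2) := by
      have := mp.one_coact (mp.GV.one (mp.GH.s q.1.2))
      rw [mp.GV.s_one, mp.GV.t_one] at this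
      rw [h2]; exact this
    simp only [MatchedPair.iotaV, MatchedPair.iotaH, ha, hc]
    have e1 : mp.GV.mul q.1.1 (mp.GV.one (mp.GH.s q.1.2)) = q.1.1 := by
      rw [← h2]; exact mp.GV.mul_one _
    have e2 : mp.GH.mul (mp.GH.one (mp.GH.s q.1.2)) q.1.2 = q.1.2 :=
      mp.GH.one_mul _
    rw [e1, e2]
  refine ⟨?_, ?_, ?_, ?_, ?_, ?_, ?_, ?_⟩
  · intro g h hgh
    have := congrArg (fun a : mp.Diag => a.1.1) hgh
    simpa [MatchedPair.iotaV] using this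
  · intro x y hxy
    have := congrArg (fun a : mp.Diag => a.1.2) hxy
    simpa [MatchedPair.iotaH] using this
  · intro g
    constructor
    · rw [hs]; rfl
    · rw [ht]; exact mp.GH.t_one _
  · intro x
    constructor
    · rw [hs]; exact mp.GV.s_one _
    · rw [ht]; rfl
  · intro g h hgh
    have hcomp : DG.t (mp.iotaV g) = DG.s (mp.iotaV h) := by
      rw [ht, hs]; simp [MatchedPair.iotaV, mp.GH.t_one, hgh]
    apply Subtype.ext
    rw [hmul _ _ hcomp]
    have ha : mp.act (mp.GH.one (mp.GV.t g)) h = h := by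
      have := mp.one_act h; rwa [← hgh] at this
    have hc : mp.coact (mp.GH.one (mp.GV.t g)) h = mp.GH.one (mp.GV.t h) := by
      have := mp.one_coact h; rwa [← hgh] at this
    simp only [MatchedPair.iotaV, ha, hc]
    have e2 : mp.GH.mul (mp.GH.one (mp.GV.t h)) (mp.GH.one (mp.GV.t h))
        = mp.GH.one (mp.GV.t h) := by
      have := mp.GH.one_mul (mp.GH.one (mp.GV.t h))
      rwa [mp.GH.s_one] at this
    rw [e2, mp.GV.t_mul g h hgh]
  · intro x y hxy
    have hcomp : DG.t (mp.iotaH x) = DG.s (mp.iotaH y) := by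
      rw [ht, hs]; simp [MatchedPair.iotaH, mp.GV.s_one, hxy]
    apply Subtype.ext
    rw [hmul _ _ hcomp]
    have ha : mp.act x (mp.GV.one (mp.GH.s y)) = mp.GV.one (mp.GH.s x) := by
      rw [← hxy]; exact mp.act_one x
    have hc : mp.coact x (mp.GV.one (mp.GH.s y)) = x := by
      rw [← hxy]; exact mp.coact_one x
    simp only [MatchedPair.iotaH, ha, hc]
    have e1 : mp.GV.mul (mp.GV.one (mp.GH.s x)) (mp.GV.one (mp.GH.s x))
        = mp.GV.one (mp.GH.s x) := by
      have := mp.GV.one_mul (mp.GV.one (mp.GH.s x))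
      rwa [mp.GV.s_one] at this
    rw [e1, mp.GH.s_mul x y hxy]
  · intro p
    constructor
    · apply Subtype.ext
      rw [hone]
      simp [MatchedPair.iotaV, mp.GV.t_one]
    · apply Subtype.ext
      rw [hone]
      simp [MatchedPair.iotaH, mp.GH.s_one]
  · intro d
    refine ⟨d, ?_, ?_⟩
    · exact (Subtype.ext (keyVH d)).symm
    · intro q hq
      apply Subtype.ext
      rw [hq]
      exact (keyVH q).symm
end

section
/- Conversely, if a groupoid D on base P has an exact factorization D = V·H by wide subgroupoids V and H (every arrow d ∈ D is uniquely d = g·x with g ∈ V, x ∈ H), then there exist a left action ▷ of H on V and a right action ◁ of V on H determined by x·h = (x▷h)·(x◁h) for composable x ∈ H, h ∈ V, and (H, V, ▷, ◁) is a matched pair of groupoids whose diagonal groupoid is isomorphic to D. -/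
universe u v

/-- if a groupoid `D` has an exact factorization `D = V·H` by wide
subgroupoids `V` and `H`, then there are actions `▷` of `H` on `V` and `◁` of `V` on
`H`, determined by `x·h = (x▷h)·(x◁h)`, making `(H, V, ▷, ◁)` a matched pair of
groupoids whose diagonal groupoid is isomorphic to `D` (via `(g,x) ↦ g·x`). -/
theorem matched_pair_of_exact_factorization {P : Type u} {G : Type v}
    (D : Gpd P G) (Vs Hs : Set G)
    -- `V` is a wide subgroupoid:
    (hVone : ∀ p : P, D.one p ∈ Vs)
    (hVmul : ∀ g h, g ∈ Vs → h ∈ Vs → D.t g = D.s h → D.mul g h ∈ Vs)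
    (hVinv : ∀ g, g ∈ Vs → D.inv g ∈ Vs)
    -- `H` is a wide subgroupoid:
    (hHone : ∀ p : P, D.one p ∈ Hs)
    (hHmul : ∀ x y, x ∈ Hs → y ∈ Hs → D.t x = D.s y → D.mul x y ∈ Hs)
    (hHinv : ∀ x, x ∈ Hs → D.inv x ∈ Hs)
    -- exact factorization: every arrow is uniquely `g·x` with `g ∈ V`, `x ∈ H`:
    (hfact : ∀ d : G, ∃! q : G × G,
      q.1 ∈ Vs ∧ q.2 ∈ Hs ∧ D.t q.1 = D.s q.2 ∧ d = D.mul q.1 q.2) :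
    ∃ act coact : G → G → G,
      -- the actions are determined by `x·h = (x▷h)·(x◁h)`:
      (∀ x h, x ∈ Hs → h ∈ Vs → D.t x = D.s h →
        act x h ∈ Vs ∧ coact x h ∈ Hs ∧
        D.s (act x h) = D.s x ∧ D.t (act x h) = D.s (coact x h) ∧
        D.t (coact x h) = D.t h ∧
        D.mul x h = D.mul (act x h) (coact x h)) ∧
      -- `▷` is a left action of `H`:
      (∀ x y h, x ∈ Hs → y ∈ Hs → h ∈ Vs → D.t x = D.s y → D.t y = D.s h →
        act (D.mul x y) h = act x (act y h)) ∧
      (∀ h, h ∈ Vs → act (D.one (D.s h)) h = h) ∧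
      -- `◁` is a right action of `V`:
      (∀ x g h, x ∈ Hs → g ∈ Vs → h ∈ Vs → D.t x = D.s g → D.t g = D.s h →
        coact x (D.mul g h) = coact (coact x g) h) ∧
      (∀ x, x ∈ Hs → coact x (D.one (D.t x)) = x) ∧
      -- the matched pair conditions:
      (∀ x g h, x ∈ Hs → g ∈ Vs → h ∈ Vs → D.t x = D.s g → D.t g = D.s h →
        act x (D.mul g h) = D.mul (act x g) (act (coact x g) h)) ∧
      (∀ x y g, x ∈ Hs → y ∈ Hs → g ∈ Vs → D.t x = D.s y → D.t y = D.s g →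
        coact (D.mul x y) g = D.mul (coact x (act y g)) (coact y g)) ∧
      -- the multiplication map from the diagonal groupoid of the matched pair to `D`
      -- is a bijection ...
      Function.Bijective
        (fun q : {q : G × G // q.1 ∈ Vs ∧ q.2 ∈ Hs ∧ D.t q.1 = D.s q.2} =>
          D.mul q.1.1 q.1.2) ∧
      -- ... intertwining the diagonal product `(g,x)(h,y) = (g(x▷h), (x◁h)y)` with
      -- the product of `D`, so that the diagonal groupoid is isomorphic to `D`:
      (∀ g x h y, g ∈ Vs → x ∈ Hs → h ∈ Vs → y ∈ Hs →
        D.t g = D.s x → D.t h = D.s y → D.t x = D.s h →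
        D.mul (D.mul g x) (D.mul h y) =
          D.mul (D.mul g (act x h)) (D.mul (coact x h) y)) := by
  
  classical
  set F : G → G × G := fun d => Classical.choose (hfact d) with hF
  have hFspec : ∀ d, (F d).1 ∈ Vs ∧ (F d).2 ∈ Hs ∧ D.t (F d).1 = D.s (F d).2 ∧
      d = D.mul (F d).1 (F d).2 := fun d => (Classical.choose_spec (hfact d)).1
  have hFuniq : ∀ d (q : G × G), (q.1 ∈ Vs ∧ q.2 ∈ Hs ∧ D.t q.1 = D.s q.2 ∧
      d = D.mul q.1 q.2) → q = F d :=
    fun d q hq => (Classical.choose_spec (hfact d)).2 q hq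
  set act : G → G → G := fun x h => (F (D.mul x h)).1 with hact
  set coact : G → G → G := fun x h => (F (D.mul x h)).2 with hcoact
  -- key uniqueness lemma
  have key : ∀ x h g y, g ∈ Vs → y ∈ Hs → D.t g = D.s y →
      D.mul x h = D.mul g y → act x h = g ∧ coact x h = y := by
    intro x h g y hg hy hty heq
    have := hFuniq (D.mul x h) (g, y) ⟨hg, hy, hty, heq⟩
    exact ⟨congrArg Prod.fst this.symm, congrArg Prod.snd this.symm⟩
  -- basic spec of the factorization of x·h
  have spec : ∀ x h, x ∈ Hs → h ∈ Vs → D.t x = D.s h →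
      act x h ∈ Vs ∧ coact x h ∈ Hs ∧
      D.s (act x h) = D.s x ∧ D.t (act x h) = D.s (coact x h) ∧
      D.t (coact x h) = D.t h ∧
      D.mul x h = D.mul (act x h) (coact x h) := by
    intro x h hx hh hxh
    obtain ⟨h1, h2, h3, h4⟩ := hFspec (D.mul x h)
    refine ⟨h1, h2, ?_, h3, ?_, h4⟩
    · have e1 : D.s (D.mul x h) = D.s x := D.s_mul x h hxh
      have e2 : D.s (D.mul (act x h) (coact x h)) = D.s (act x h) :=
        D.s_mul _ _ h3
      rw [← e2, ← h4, e1]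
    · have e1 : D.t (D.mul x h) = D.t h := D.t_mul x h hxh
      have e2 : D.t (D.mul (act x h) (coact x h)) = D.t (coact x h) :=
        D.t_mul _ _ h3
      rw [← e2, ← h4, e1]
  refine ⟨act, coact, spec, ?_, ?_, ?_, ?_, ?_, ?_, ?_, ?_⟩
  · -- left action multiplicativity
    intro x y h hx hy hh hxy hyh
    obtain ⟨ha, hb, hsa, htab, htb, heq⟩ := spec y h hy hh hyh
    set a := act y h; set b := coact y h
    have hxa : D.t x = D.s a := by rw [hxy, ← hsa]
    obtain ⟨ha', hb', hsa', htab', htb', heq'⟩ := spec x a hx ha hxa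
    set a' := act x a; set b' := coact x a
    have htb'b : D.t b' = D.s b := by rw [htb', ← htab]
    have calc1 : D.mul (D.mul x y) h = D.mul a' (D.mul b' b) := by
      rw [D.mul_assoc x y h hxy hyh, heq, ← D.mul_assoc x a b hxa htab,
        heq', D.mul_assoc a' b' b htab' htb'b]
    have hcomp : D.t a' = D.s (D.mul b' b) := by
      rw [D.s_mul b' b htb'b]; exact htab'
    exact (key (D.mul x y) h a' (D.mul b' b) ha' (hHmul b' b hb' hb htb'b)
      hcomp calc1).1
  · -- left action on units
    intro h hh
    have h1 : D.mul (D.one (D.s h)) h = D.mul h (D.one (D.t h)) := by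
      rw [D.one_mul, D.mul_one]
    have h2 : D.t h = D.s (D.one (D.t h)) := (D.s_one _).symm
    exact (key (D.one (D.s h)) h h (D.one (D.t h)) hh (hHone _) h2 h1).1
  · -- right action multiplicativity
    intro x g h hx hg hh hxg hgh
    obtain ⟨ha, hb, hsa, htab, htb, heq⟩ := spec x g hx hg hxg
    set a := act x g; set b := coact x g
    have hbh : D.t b = D.s h := by rw [htb, hgh]
    obtain ⟨ha2, hb2, hsa2, htab2, htb2, heq2⟩ := spec b h hb hh hbh
    set a2 := act b h; set b2 := coact b h
    have htaa2 : D.t a = D.s a2 := by rw [htab, ← hsa2]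
    have calc1 : D.mul x (D.mul g h) = D.mul (D.mul a a2) b2 := by
      rw [← D.mul_assoc x g h hxg hgh, heq, D.mul_assoc a b h htab hbh,
        heq2, ← D.mul_assoc a a2 b2 htaa2 htab2]
    have hcomp : D.t (D.mul a a2) = D.s b2 := by
      rw [D.t_mul a a2 htaa2]; exact htab2
    exact (key x (D.mul g h) (D.mul a a2) b2 (hVmul a a2 ha ha2 htaa2)
      hb2 hcomp calc1).2
  · -- right action on units
    intro x hx
    have h1 : D.mul x (D.one (D.t x)) = D.mul (D.one (D.s x)) x := by
      rw [D.one_mul, D.mul_one]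
    have h2 : D.t (D.one (D.s x)) = D.s x := D.t_one _
    exact (key x (D.one (D.t x)) (D.one (D.s x)) x (hVone _) hx h2 h1).2
  · -- matched pair condition 1
    intro x g h hx hg hh hxg hgh
    obtain ⟨ha, hb, hsa, htab, htb, heq⟩ := spec x g hx hg hxg
    set a := act x g; set b := coact x g
    have hbh : D.t b = D.s h := by rw [htb, hgh]
    obtain ⟨ha2, hb2, hsa2, htab2, htb2, heq2⟩ := spec b h hb hh hbh
    set a2 := act b h; set b2 := coact b h
    have htaa2 : D.t a = D.s a2 := by rw [htab, ← hsa2]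
    have calc1 : D.mul x (D.mul g h) = D.mul (D.mul a a2) b2 := by
      rw [← D.mul_assoc x g h hxg hgh, heq, D.mul_assoc a b h htab hbh,
        heq2, ← D.mul_assoc a a2 b2 htaa2 htab2]
    have hcomp : D.t (D.mul a a2) = D.s b2 := by
      rw [D.t_mul a a2 htaa2]; exact htab2
    exact (key x (D.mul g h) (D.mul a a2) b2 (hVmul a a2 ha ha2 htaa2)
      hb2 hcomp calc1).1
  · -- matched pair condition 2
    intro x y g hx hy hg hxy hyg
    obtain ⟨ha, hb, hsa, htab, htb, heq⟩ := spec y g hy hg hyg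
    set a := act y g; set b := coact y g
    have hxa : D.t x = D.s a := by rw [hxy, ← hsa]
    obtain ⟨ha', hb', hsa', htab', htb', heq'⟩ := spec x a hx ha hxa
    set a' := act x a; set b' := coact x a
    have htb'b : D.t b' = D.s b := by rw [htb', ← htab]
    have calc1 : D.mul (D.mul x y) g = D.mul a' (D.mul b' b) := by
      rw [D.mul_assoc x y g hxy hyg, heq, ← D.mul_assoc x a b hxa htab,
        heq', D.mul_assoc a' b' b htab' htb'b]
    have hcomp : D.t a' = D.s (D.mul b' b) := by
      rw [D.s_mul b' b htb'b]; exact htab'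
    exact (key (D.mul x y) g a' (D.mul b' b) ha' (hHmul b' b hb' hb htb'b)
      hcomp calc1).2
  · -- bijectivity
    constructor
    · rintro ⟨⟨g1, x1⟩, hg1, hx1, ht1⟩ ⟨⟨g2, x2⟩, hg2, hx2, ht2⟩ heq
      simp only at heq
      have e1 := hFuniq (D.mul g1 x1) (g1, x1) ⟨hg1, hx1, ht1, rfl⟩
      have e2 := hFuniq (D.mul g1 x1) (g2, x2) ⟨hg2, hx2, ht2, heq⟩
      exact Subtype.ext (e1.trans e2.symm)
    · intro d
      obtain ⟨h1, h2, h3, h4⟩ := hFspec d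
      exact ⟨⟨F d, h1, h2, h3⟩, h4.symm⟩
  · -- intertwining
    intro g x h y hg hx hh hy hgx hhy hxh
    obtain ⟨ha, hb, hsa, htab, htb, heq⟩ := spec x h hx hh hxh
    set a := act x h; set b := coact x h
    have hga : D.t g = D.s a := by rw [hgx, ← hsa]
    have hby : D.t b = D.s y := by rw [htb, hhy]
    have hxhy : D.t x = D.s (D.mul h y) := by rw [D.s_mul h y hhy]; exact hxh
    have hgxhy : D.t g = D.s (D.mul x (D.mul h y)) := by
      rw [D.s_mul x (D.mul h y) hxhy]; exact hgx
    calc D.mul (D.mul g x) (D.mul h y)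
        = D.mul g (D.mul x (D.mul h y)) := by
          rw [D.mul_assoc g x (D.mul h y) hgx hxhy]
      _ = D.mul g (D.mul (D.mul x h) y) := by
          rw [D.mul_assoc x h y hxh hhy]
      _ = D.mul g (D.mul (D.mul a b) y) := by rw [heq]
      _ = D.mul g (D.mul a (D.mul b y)) := by
          rw [D.mul_assoc a b y htab hby]
      _ = D.mul (D.mul g a) (D.mul b y) := by
          rw [D.mul_assoc g a (D.mul b y) hga
            (by rw [D.s_mul b y hby]; exact htab)]
end

section
/- Let (σ, τ) be a pair of compatible 2-cocycles for a vacant double groupoid T with matched pair (H, V) and diagonal groupoid D = V ⋈ H. Then the function ω on composable triples of D defined by ω((g,x),(h,y),(f,z)) = τ(B₁, B₂)·σ(A₁, A₂), where B₁, B₂ are the boxes with top edges x◁h and y and right vertical edges y▷f and f respectively, and A₁, A₂ are the boxes with top edges x and x◁h and right edges h and y▷f respectively, is a normalized 3-cocycle on D. -/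
universe u v w u4

namespace MatchedPair

variable {P : Type u} {H : Type v} {V : Type w} (mp : MatchedPair P H V)

/-- The boxes of the vacant double groupoid associated to a matched pair are the pairs
`(x, g)` (top edge `x ∈ H`, right edge `g ∈ V`) with `r(x) = t(g)`; then the left edge
is `x ▷ g` and the bottom edge is `x ◁ g`. -/
def IsBox (A : H × V) : Prop := mp.GH.t A.1 = mp.GV.s A.2

/-- Vertical composition of boxes (defined when `coact A.1 A.2 = B.1`). -/
def vcomp (A B : H × V) : H × V := (A.1, mp.GV.mul A.2 B.2)

/-- Horizontal composition of boxes (defined when `t A.1 = s B.1` and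
`A.2 = act B.1 B.2`). -/
def hcomp (A B : H × V) : H × V := (mp.GH.mul A.1 B.1, B.2)

/-- The identity box for vertical composition at the horizontal edge `x`. -/
def vIdBox (x : H) : H × V := (x, mp.GV.one (mp.GH.t x))

/-- The identity box for horizontal composition at the vertical edge `g`. -/
def hIdBox (g : V) : H × V := (mp.GH.one (mp.GV.s g), g)

/-- `σ` is a 2-cocycle for the vertical composition groupoid of boxes. -/
def IsVCocycle {k : Type u4} [Field k] (σ : (H × V) → (H × V) → kˣ) : Prop :=
  ∀ A B C : H × V, mp.IsBox A → mp.IsBox B → mp.IsBox C →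
    mp.coact A.1 A.2 = B.1 → mp.coact B.1 B.2 = C.1 →
    σ A B * σ (mp.vcomp A B) C = σ B C * σ A (mp.vcomp B C)

/-- `σ` is normalized for vertical composition. -/
def IsVNormalized {k : Type u4} [Field k] (σ : (H × V) → (H × V) → kˣ) : Prop :=
  ∀ A : H × V, mp.IsBox A →
    σ (mp.vIdBox A.1) A = 1 ∧ σ A (mp.vIdBox (mp.coact A.1 A.2)) = 1

/-- `σ` is trivial on pairs of horizontally degenerate (identity) boxes. -/
def IsVDegNormalized {k : Type u4} [Field k] (σ : (H × V) → (H × V) → kˣ) : Prop :=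
  ∀ g h : V, mp.GV.t g = mp.GV.s h → σ (mp.hIdBox g) (mp.hIdBox h) = 1

/-- `τ` is a 2-cocycle for the horizontal composition groupoid of boxes. -/
def IsHCocycle {k : Type u4} [Field k] (τ : (H × V) → (H × V) → kˣ) : Prop :=
  ∀ A B C : H × V, mp.IsBox A → mp.IsBox B → mp.IsBox C →
    mp.GH.t A.1 = mp.GH.s B.1 → A.2 = mp.act B.1 B.2 →
    mp.GH.t B.1 = mp.GH.s C.1 → B.2 = mp.act C.1 C.2 →
    τ A B * τ (mp.hcomp A B) C = τ B C * τ A (mp.hcomp B C)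

/-- `τ` is normalized for horizontal composition. -/
def IsHNormalized {k : Type u4} [Field k] (τ : (H × V) → (H × V) → kˣ) : Prop :=
  ∀ A : H × V, mp.IsBox A →
    τ (mp.hIdBox (mp.act A.1 A.2)) A = 1 ∧ τ A (mp.hIdBox A.2) = 1

/-- `τ` is trivial on pairs of vertically degenerate (identity) boxes. -/
def IsHDegNormalized {k : Type u4} [Field k] (τ : (H × V) → (H × V) → kˣ) : Prop :=
  ∀ x y : H, mp.GH.t x = mp.GH.s y → τ (mp.vIdBox x) (mp.vIdBox y) = 1

/-- The compatibility condition between `σ` and `τ` defining `Opext(V, H)`: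
`σ(AB, CD)·τ(A over C, B over D) = τ(A,B)τ(C,D)σ(A,C)σ(B,D)` for all appropriately
composable boxes `A, B, C, D`. -/
def IsCompatiblePair {k : Type u4} [Field k]
    (σ τ : (H × V) → (H × V) → kˣ) : Prop :=
  ∀ (a b c d : H) (q e : V),
    mp.GH.t b = mp.GV.s q → mp.GH.t d = mp.GV.s e →
    mp.GH.t a = mp.GH.s b → mp.GH.t c = mp.GH.s d →
    mp.coact b q = d → mp.coact a (mp.act b q) = c →
    σ (mp.hcomp (a, mp.act b q) (b, q)) (mp.hcomp (c, mp.act d e) (d, e)) *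
        τ (mp.vcomp (a, mp.act b q) (c, mp.act d e)) (mp.vcomp (b, q) (d, e)) =
      τ (a, mp.act b q) (b, q) * τ (c, mp.act d e) (d, e) *
        σ (a, mp.act b q) (c, mp.act d e) * σ (b, q) (d, e)

/-- An arrow `(g, x)` of the diagonal groupoid is valid when `e(g) = s(x)`. -/
def IsDArr (A : V × H) : Prop := mp.GV.t A.1 = mp.GH.s A.2

/-- The product of the diagonal groupoid `D = V ⋈ H`:
`(g,x)(h,y) = (g(x▷h), (x◁h)y)`. -/
def dmul (A B : V × H) : V × H :=
  (mp.GV.mul A.1 (mp.act A.2 B.1), mp.GH.mul (mp.coact A.2 B.1) B.2)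

/-- The Kac 3-cocycle `ω = ω(σ, τ)` on the diagonal groupoid:
`ω((g,x),(h,y),(f,z)) = τ(box(x◁h, y▷f), box(y,f)) · σ(box(x,h), box(x◁h, y▷f))`. -/
def kacOmega {k : Type u4} [Field k] (σ τ : (H × V) → (H × V) → kˣ) :
    (V × H) → (V × H) → (V × H) → kˣ :=
  fun A B C =>
    τ (mp.coact A.2 B.1, mp.act B.2 C.1) (B.2, C.1) *
      σ (A.2, B.1) (mp.coact A.2 B.1, mp.act B.2 C.1)

end MatchedPair

/-- for a pair `(σ, τ)` of compatible normalized 2-cocycles of a vacant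
double groupoid (equivalently, of a matched pair of groupoids `(H, V)`), the function
`ω((g,x),(h,y),(f,z)) = τ(box(x◁h, y▷f), box(y,f)) · σ(box(x,h), box(x◁h, y▷f))`
is a normalized 3-cocycle on the diagonal groupoid `D = V ⋈ H`. -/
theorem kacOmega_is_normalized_3cocycle {P : Type u} {H : Type v} {V : Type w}
    {k : Type u4} [Field k]
    (mp : MatchedPair P H V) (σ τ : (H × V) → (H × V) → kˣ)
    (hσ : mp.IsVCocycle σ) (hσn : mp.IsVNormalized σ)
    (hσd : mp.IsVDegNormalized σ)
    (hτ : mp.IsHCocycle τ) (hτn : mp.IsHNormalized τ)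
    (hτd : mp.IsHDegNormalized τ)
    (hcompat : mp.IsCompatiblePair σ τ) :
    -- the 3-cocycle identity on composable quadruples of `D`:
    (∀ A B C E : V × H, mp.IsDArr A → mp.IsDArr B → mp.IsDArr C → mp.IsDArr E →
      mp.GH.t A.2 = mp.GV.s B.1 → mp.GH.t B.2 = mp.GV.s C.1 →
      mp.GH.t C.2 = mp.GV.s E.1 →
      mp.kacOmega σ τ A B C * mp.kacOmega σ τ A (mp.dmul B C) E *
          mp.kacOmega σ τ B C E =
        mp.kacOmega σ τ (mp.dmul A B) C E * mp.kacOmega σ τ A B (mp.dmul C E)) ∧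
    -- normalization: `ω(a, id_p, c) = 1`:
    (∀ (A C : V × H) (p : P), mp.IsDArr A → mp.IsDArr C →
      mp.GH.t A.2 = p → mp.GV.s C.1 = p →
      mp.kacOmega σ τ A (mp.GV.one p, mp.GH.one p) C = 1) := by
  constructor
  · rintro ⟨g, x⟩ ⟨h, y⟩ ⟨f, z⟩ ⟨e, w⟩ hA hB hC hE hAB hBC hCE
    simp only [MatchedPair.IsDArr] at hA hB hC hE
    dsimp only at hAB hBC hCE
    -- basic composability facts
    have hay : mp.GH.t (mp.coact x h) = mp.GH.s y := (mp.t_coact x h hAB).trans hB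
    have hap : mp.GH.t (mp.coact x h) = mp.GV.s (mp.act y f) := by
      rw [mp.t_coact x h hAB, mp.s_act y f hBC]; exact hB
    have hbz : mp.GH.t (mp.coact y f) = mp.GH.s z := (mp.t_coact y f hBC).trans hC
    have hbq : mp.GH.t (mp.coact y f) = mp.GV.s (mp.act z e) := by
      rw [mp.t_coact y f hBC, mp.s_act z e hCE]; exact hC
    have htrb : mp.GH.t (mp.coact (mp.coact x h) (mp.act y f)) = mp.GH.s (mp.coact y f) :=
      (mp.t_coact _ _ hap).trans (mp.t_act y f hBC)
    have htr : mp.GH.t (mp.coact (mp.coact x h) (mp.act y f)) = mp.GV.s (mp.act (mp.coact y f) (mp.act z e)) := by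
      rw [htrb, mp.s_act _ _ hbq]
    -- rewriting equations from the matched pair axioms
    have hw1 : mp.coact x (mp.GV.mul h (mp.act y f))
        = mp.coact (mp.coact x h) (mp.act y f) :=
      mp.coact_mulV x h (mp.act y f) hAB (by rw [mp.s_act y f hBC]; exact hB)
    have hw2 : mp.act (mp.GH.mul (mp.coact y f) z) e
        = mp.act (mp.coact y f) (mp.act z e) := mp.mulH_act _ z e hbz hCE
    have hw3 : mp.coact (mp.GH.mul (mp.coact x h) y) f
        = mp.GH.mul (mp.coact (mp.coact x h) (mp.act y f)) (mp.coact y f) :=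
      mp.coact_mulH _ y f hay hBC
    have hw4 : mp.act y (mp.GV.mul f (mp.act z e))
        = mp.GV.mul (mp.act y f) (mp.act (mp.coact y f) (mp.act z e)) :=
      mp.act_mulV y f (mp.act z e) hBC (by rw [mp.s_act z e hCE]; exact hC)
    simp only [MatchedPair.kacOmega, MatchedPair.dmul]
    rw [hw1, hw2, hw3, hw4]
    -- the three main equations
    have E1 := hσ (x, h) (mp.coact x h, mp.act y f)
      (mp.coact (mp.coact x h) (mp.act y f), mp.act (mp.coact y f) (mp.act z e))
      hAB hap htr rfl rfl
    simp only [MatchedPair.vcomp] at E1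
    have E2 := hτ (mp.coact (mp.coact x h) (mp.act y f), mp.act (mp.coact y f) (mp.act z e))
      (mp.coact y f, mp.act z e) (z, e) htr hbq hCE htrb rfl hbz rfl
    simp only [MatchedPair.hcomp] at E2
    have E3 := hcompat (mp.coact x h) y (mp.coact (mp.coact x h) (mp.act y f))
      (mp.coact y f) f (mp.act z e) hBC hbq hay htrb rfl rfl
    simp only [MatchedPair.hcomp, MatchedPair.vcomp] at E3
    -- abbreviate
    set s1 := σ (x, h) (mp.coact x h, mp.act y f) with hs1
    set s2 := σ (x, mp.GV.mul h (mp.act y f))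
      (mp.coact (mp.coact x h) (mp.act y f), mp.act (mp.coact y f) (mp.act z e)) with hs2
    set s3 := σ (mp.coact x h, mp.act y f)
      (mp.coact (mp.coact x h) (mp.act y f), mp.act (mp.coact y f) (mp.act z e)) with hs3
    set s4 := σ (x, h)
      (mp.coact x h, mp.GV.mul (mp.act y f) (mp.act (mp.coact y f) (mp.act z e))) with hs4
    set t1 := τ (mp.coact (mp.coact x h) (mp.act y f), mp.act (mp.coact y f) (mp.act z e))
      (mp.coact y f, mp.act z e) with ht1
    set t2 := τ (mp.GH.mul (mp.coact (mp.coact x h) (mp.act y f)) (mp.coact y f), mp.act z e)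
      (z, e) with ht2
    set t3 := τ (mp.coact y f, mp.act z e) (z, e) with ht3
    set t4 := τ (mp.coact (mp.coact x h) (mp.act y f), mp.act (mp.coact y f) (mp.act z e))
      (mp.GH.mul (mp.coact y f) z, e) with ht4
    set u1 := σ (mp.GH.mul (mp.coact x h) y, f)
      (mp.GH.mul (mp.coact (mp.coact x h) (mp.act y f)) (mp.coact y f), mp.act z e) with hu1
    set u2 := τ (mp.coact x h, mp.GV.mul (mp.act y f) (mp.act (mp.coact y f) (mp.act z e)))
      (y, mp.GV.mul f (mp.act z e)) with hu2
    set v1 := τ (mp.coact x h, mp.act y f) (y, f) with hv1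
    set v2 := σ (y, f) (mp.coact y f, mp.act z e) with hv2
    -- now: E1 : s1 * s2 = s3 * s4, E2 : t1 * t2 = t3 * t4,
    -- E3 : u1 * u2 = v1 * t1 * s3 * v2
    -- goal : v1 * s1 * (t4 * s2) * (t3 * v2) = t2 * u1 * (u2 * s4)
    have e1 := congrArg (Units.val) E1
    have e2 := congrArg (Units.val) E2
    have e3 := congrArg (Units.val) E3
    push_cast at e1 e2 e3
    refine mul_right_cancel (b := t1 * s3) (Units.ext ?_)
    push_cast
    linear_combination ((t3 : k) * t4 * (v1 * t1 * s3 * v2)) * e1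
      - ((s3 : k) * s4 * (v1 * t1 * s3 * v2)) * e2
      - ((s3 : k) * s4 * (t1 * t2)) * e3
  · rintro ⟨g, x⟩ ⟨f, z⟩ p hA hC hp1 hp2
    simp only [MatchedPair.IsDArr] at hA hC
    dsimp only at hp1 hp2
    simp only [MatchedPair.kacOmega]
    have hbox : mp.GH.t x = mp.GV.s f := hp1.trans hp2.symm
    have h1 : mp.coact x (mp.GV.one p) = x := by rw [← hp1]; exact mp.coact_one x
    have h2 : mp.act (mp.GH.one p) f = f := by rw [← hp2]; exact mp.one_act f
    rw [h1, h2]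
    have hτ1 : τ (x, f) (mp.GH.one p, f) = 1 := by
      have := (hτn (x, f) hbox).2
      simpa [MatchedPair.hIdBox, hp2] using this
    have hσ1 : σ (x, mp.GV.one p) (x, f) = 1 := by
      have := (hσn (x, f) hbox).1
      simpa [MatchedPair.vIdBox, hp1] using this
    rw [hτ1, hσ1, mul_one]
end

section
/- The Kac 3-cocycle ω = ω(σ,τ) on the diagonal groupoid D = V ⋈ H satisfies ω((g,x),(h,y),(f,z)) = ω((id_{s(x)}, x),(h,y),(f, id_{e(f)})) for all composable triples in D; in particular ω is trivial whenever its first argument lies in V (i.e., has trivial H-component). -/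
universe u v w u4

/-- the Kac 3-cocycle `ω = ω(σ,τ)` on `D = V ⋈ H` satisfies
`ω((g,x),(h,y),(f,z)) = ω((id_{s(x)}, x), (h,y), (f, id_{e(f)}))`; in particular it is
trivial whenever its first argument lies in `V` (i.e. has trivial `H`-component). -/
theorem kacOmega_depends_only_on_xhyf {P : Type u} {H : Type v} {V : Type w}
    {k : Type u4} [Field k]
    (mp : MatchedPair P H V) (σ τ : (H × V) → (H × V) → kˣ)
    (hσ : mp.IsVCocycle σ) (hσn : mp.IsVNormalized σ)
    (hσd : mp.IsVDegNormalized σ)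
    (hτ : mp.IsHCocycle τ) (hτn : mp.IsHNormalized τ)
    (hτd : mp.IsHDegNormalized τ)
    (hcompat : mp.IsCompatiblePair σ τ) :
    (∀ A B C : V × H, mp.IsDArr A → mp.IsDArr B → mp.IsDArr C →
      mp.GH.t A.2 = mp.GV.s B.1 → mp.GH.t B.2 = mp.GV.s C.1 →
      mp.kacOmega σ τ A B C =
        mp.kacOmega σ τ (mp.GV.one (mp.GH.s A.2), A.2) B
          (C.1, mp.GH.one (mp.GV.t C.1))) ∧
    (∀ (g : V) (B C : V × H), mp.IsDArr B → mp.IsDArr C →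
      mp.GV.t g = mp.GV.s B.1 → mp.GH.t B.2 = mp.GV.s C.1 →
      mp.kacOmega σ τ (g, mp.GH.one (mp.GV.t g)) B C = 1) := by
  constructor
  · intro A B C _ _ _ _ _
    rfl
  · rintro g ⟨h, y⟩ ⟨f, z⟩ hB hC hgh hyf
    have hsy : mp.GV.t h = mp.GH.s y := hB
    have hbox : mp.IsBox (y, f) := hyf
    simp only [MatchedPair.kacOmega]
    have hone : mp.GH.one (mp.GV.t g) = mp.GH.one (mp.GV.s h) := by rw [hgh]
    rw [hone, mp.one_coact h]
    have h1 : τ (mp.GH.one (mp.GV.t h), mp.act y f) (y, f) = 1 := by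
      have := (hτn (y, f) hbox).1
      rwa [MatchedPair.hIdBox, mp.s_act y f hyf, ← hsy] at this
    have h2 : σ (mp.GH.one (mp.GV.s h), h)
        (mp.GH.one (mp.GV.t h), mp.act y f) = 1 := by
      have := hσd h (mp.act y f) (by rw [mp.s_act y f hyf, ← hsy])
      rwa [MatchedPair.hIdBox, MatchedPair.hIdBox, mp.s_act y f hyf, ← hsy] at this
    rw [h1, h2, one_mul]
end

section
/- Let D be a finite groupoid, V a wide subgroupoid, ω a normalized 3-cocycle on D trivial on V, and ψ a 2-cochain on V with dψ = ω|_V. Then the category C(D, ω, V, ψ) of k_ψV-bimodules in the category of D-graded vector spaces with associator ω is a fusion category (its unit object k_ψV is simple) if and only if the groupoid V ⇉ P is connected. -/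
universe u v u4

namespace GpdAux

variable {P : Type u} {G : Type v} (D : Gpd P G)

lemma cancel_left (g w : G) (h : D.s w = D.s g) :
    D.mul g (D.mul (D.inv g) w) = w := by
  rw [← D.mul_assoc g (D.inv g) w (D.s_inv g).symm (by rw [D.t_inv, h]),
    D.mul_inv, ← h, D.one_mul]

lemma inv_cancel_left (g v : G) (h : D.t g = D.s v) :
    D.mul (D.inv g) (D.mul g v) = v := by
  rw [← D.mul_assoc (D.inv g) g v (D.t_inv g) h, D.inv_mul, h, D.one_mul]

lemma cancel_right (h w : G) (hw : D.t w = D.t h) :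
    D.mul (D.mul w (D.inv h)) h = w := by
  rw [D.mul_assoc w (D.inv h) h (by rw [D.s_inv, hw]) (D.t_inv h),
    D.inv_mul, ← hw, D.mul_one]

lemma inv_cancel_right (h v : G) (hv : D.t v = D.s h) :
    D.mul (D.mul v h) (D.inv h) = v := by
  rw [D.mul_assoc v h (D.inv h) hv (D.s_inv h).symm, D.mul_inv, ← hv, D.mul_one]

/-- The delta function at an arrow. -/
def deltaFun (k : Type u4) [Field k] [DecidableEq G] (v : G) : G → k := fun w => if w = v then 1 else 0

variable {k : Type u4} [Field k] [DecidableEq G] [DecidableEq P]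

lemma leftAct_delta (ψ : G → G → kˣ) (g v : G) (hgv : D.t g = D.s v) :
    (fun w => if D.s w = D.s g then
        (ψ g (D.mul (D.inv g) w) : k) * deltaFun (k := k) v (D.mul (D.inv g) w)
      else 0)
      = (ψ g v : k) • deltaFun (k := k) (D.mul g v) := by
  funext w
  simp only [deltaFun, Pi.smul_apply, smul_eq_mul]
  by_cases hw : D.s w = D.s g
  · rw [if_pos hw]
    by_cases h1 : D.mul (D.inv g) w = v
    · have hw' : w = D.mul g v := by rw [← h1, cancel_left D g w hw]
      rw [if_pos h1, if_pos hw', h1, mul_one]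
    · have hw' : ¬ w = D.mul g v := by
        intro h; apply h1; rw [h, inv_cancel_left D g v hgv]
      rw [if_neg h1, if_neg hw', mul_zero, mul_zero]
  · rw [if_neg hw]
    have hw' : ¬ w = D.mul g v := by
      intro h; apply hw; rw [h, D.s_mul g v hgv]
    rw [if_neg hw', mul_zero]

lemma rightAct_delta (ψ : G → G → kˣ) (h v : G) (hvh : D.t v = D.s h) :
    (fun w => if D.t w = D.t h then
        (ψ (D.mul w (D.inv h)) h : k) * deltaFun (k := k) v (D.mul w (D.inv h))
      else 0)
      = (ψ v h : k) • deltaFun (k := k) (D.mul v h) := by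
  funext w
  simp only [deltaFun, Pi.smul_apply, smul_eq_mul]
  by_cases hw : D.t w = D.t h
  · rw [if_pos hw]
    by_cases h1 : D.mul w (D.inv h) = v
    · have hw' : w = D.mul v h := by rw [← h1, cancel_right D h w hw]
      rw [if_pos h1, if_pos hw', h1, mul_one]
    · have hw' : ¬ w = D.mul v h := by
        intro hh; apply h1; rw [hh, inv_cancel_right D h v hvh]
      rw [if_neg h1, if_neg hw', mul_zero, mul_zero]
  · rw [if_neg hw]
    have hw' : ¬ w = D.mul v h := by
      intro hh; apply hw; rw [hh, D.t_mul v h hvh]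
    rw [if_neg hw', mul_zero]

/-- Functions supported in a set, as a submodule. -/
def suppIn (k : Type u4) [Field k] (A : Set G) : Submodule k (G → k) where
  carrier := {f | ∀ w ∉ A, f w = 0}
  add_mem' := by intro f g hf hg w hw; simp [Pi.add_apply, hf w hw, hg w hw]
  zero_mem' := by intro w hw; rfl
  smul_mem' := by intro c f hf w hw; simp [Pi.smul_apply, hf w hw]

lemma mem_suppIn {A : Set G} {f : G → k} :
    f ∈ suppIn (G := G) k A ↔ ∀ w ∉ A, f w = 0 := Iff.rfl

lemma sum_delta [Fintype G] (f : G → k) :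
    f = ∑ u : G, f u • deltaFun (k := k) u := by
  funext w
  rw [Finset.sum_apply]
  simp [deltaFun, Pi.smul_apply, smul_eq_mul, mul_ite, Finset.sum_ite_eq]

end GpdAux

/-- let `D` be a finite groupoid, `V` a wide subgroupoid, `ω` a
normalized 3-cocycle on `D` trivial on `V`, and `ψ` a 2-cochain on `V` with
`dψ = ω|_V`.  The tensor category `C(D, ω, V, ψ)` of `k_ψV`-bimodules in `D`-graded
vector spaces is a fusion category — equivalently, its unit object `k_ψV` is simple —
if and only if the groupoid `V ⇉ P` is connected.

Here simplicity of the unit object is expressed concretely: `k_ψV` has underlying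
space the functions `G → k` supported on `V`, graded by arrows, with left and right
regular `ψ`-twisted `V`-actions; a subobject is a subspace which is homogeneous
(closed under taking graded components) and stable under both twisted translation
actions, and simplicity says every such subspace is `0` or everything. -/
theorem unit_simple_iff_connected
    {k : Type u4} [Field k] {P : Type u} {G : Type v}
    [Fintype G] [DecidableEq G] [DecidableEq P]
    (D : Gpd P G) (Vs : Set G)
    -- `V` is a wide subgroupoid:
    (hVone : ∀ p : P, D.one p ∈ Vs)
    (hVmul : ∀ g h, g ∈ Vs → h ∈ Vs → D.t g = D.s h → D.mul g h ∈ Vs)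
    (hVinv : ∀ g, g ∈ Vs → D.inv g ∈ Vs)
    (ω : G → G → G → kˣ)
    -- `ω` is a 3-cocycle on `D`:
    (hω : ∀ a b c d : G, D.t a = D.s b → D.t b = D.s c → D.t c = D.s d →
      ω a b c * ω a (D.mul b c) d * ω b c d =
        ω (D.mul a b) c d * ω a b (D.mul c d))
    -- `ω` is normalized:
    (hωn : ∀ a b : G, D.t a = D.s b →
      ω a (D.one (D.t a)) b = 1)
    -- `ω` is trivial on `V`:
    (hωV : ∀ a b c : G, a ∈ Vs → b ∈ Vs → c ∈ Vs → D.t a = D.s b → D.t b = D.s c →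
      ω a b c = 1)
    (ψ : G → G → kˣ)
    -- `dψ = ω` on `V`:
    (hdψ : ∀ a b c : G, a ∈ Vs → b ∈ Vs → c ∈ Vs → D.t a = D.s b → D.t b = D.s c →
      ψ b c * ψ a (D.mul b c) = ω a b c * (ψ (D.mul a b) c * ψ a b)) :
    -- the unit object `k_ψV` is simple ...
    ((∀ S : Submodule k (G → k),
        -- `S` consists of functions supported on `V`:
        (∀ f ∈ S, ∀ w : G, w ∉ Vs → f w = 0) →
        -- `S` is homogeneous with respect to the `D`-grading:
        (∀ f ∈ S, ∀ v : G, (fun w => if w = v then f v else 0) ∈ S) →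
        -- `S` is stable under the left regular `ψ`-twisted action of `V`:
        (∀ f ∈ S, ∀ g ∈ Vs, (fun w =>
          if D.s w = D.s g then
            (ψ g (D.mul (D.inv g) w) : k) * f (D.mul (D.inv g) w)
          else 0) ∈ S) →
        -- `S` is stable under the right regular `ψ`-twisted action of `V`:
        (∀ f ∈ S, ∀ h ∈ Vs, (fun w =>
          if D.t w = D.t h then
            (ψ (D.mul w (D.inv h)) h : k) * f (D.mul w (D.inv h))
          else 0) ∈ S) →
        S = ⊥ ∨ (∀ f : G → k, (∀ w : G, w ∉ Vs → f w = 0) → f ∈ S))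
    -- ... if and only if `V ⇉ P` is connected:
    ↔ (∀ p q : P, ∃ g ∈ Vs, D.s g = p ∧ D.t g = q)) := by

  open GpdAux in
  constructor
  · -- simple ⟹ connected
    intro hS p q
    -- the connected component of `p` inside `V`
    set A : Set G :=
      {w | w ∈ Vs ∧ ∃ a, a ∈ Vs ∧ D.s a = D.s w ∧ D.t a = p} with hA
    have hAV : ∀ w ∈ A, w ∈ Vs := fun w hw => hw.1
    set S : Submodule k (G → k) := suppIn k A with hSdef
    have hmem : ∀ f : G → k, f ∈ S ↔ ∀ w ∉ A, f w = 0 := fun f => Iff.rfl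
    have h1 : ∀ f ∈ S, ∀ w : G, w ∉ Vs → f w = 0 := by
      intro f hf w hw
      exact (hmem f).mp hf w (fun hwA => hw (hAV w hwA))
    have h2 : ∀ f ∈ S, ∀ v : G, (fun w => if w = v then f v else 0) ∈ S := by
      intro f hf v
      rw [hmem]
      intro w hw
      by_cases hwv : w = v
      · rw [if_pos hwv]
        exact (hmem f).mp hf v (hwv ▸ hw)
      · rw [if_neg hwv]
    have h3 : ∀ f ∈ S, ∀ g ∈ Vs, (fun w =>
        if D.s w = D.s g then
          (ψ g (D.mul (D.inv g) w) : k) * f (D.mul (D.inv g) w)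
        else 0) ∈ S := by
      intro f hf g hg
      rw [hmem]
      intro w hw
      by_cases hws : D.s w = D.s g
      · rw [if_pos hws]
        have hm : D.mul (D.inv g) w ∉ A := by
          intro hmA
          apply hw
          obtain ⟨hmV, a, haV, has, hat⟩ := hmA
          have hsm : D.s (D.mul (D.inv g) w) = D.t g := by
            rw [D.s_mul (D.inv g) w (by rw [D.t_inv, hws]), D.s_inv]
          refine ⟨?_, D.mul g a, hVmul g a hg haV (by rw [has, hsm]), ?_, ?_⟩
          · rw [← cancel_left D g w hws]
            exact hVmul g _ hg hmV (by rw [hsm])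
          · rw [D.s_mul g a (by rw [has, hsm]), hws]
          · rw [D.t_mul g a (by rw [has, hsm]), hat]
        rw [(hmem f).mp hf _ hm, mul_zero]
      · rw [if_neg hws]
    have h4 : ∀ f ∈ S, ∀ h ∈ Vs, (fun w =>
        if D.t w = D.t h then
          (ψ (D.mul w (D.inv h)) h : k) * f (D.mul w (D.inv h))
        else 0) ∈ S := by
      intro f hf h hh
      rw [hmem]
      intro w hw
      by_cases hwt : D.t w = D.t h
      · rw [if_pos hwt]
        have hm : D.mul w (D.inv h) ∉ A := by
          intro hmA
          apply hw
          obtain ⟨hmV, a, haV, has, hat⟩ := hmA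
          have hsm : D.s (D.mul w (D.inv h)) = D.s w := by
            rw [D.s_mul w (D.inv h) (by rw [D.s_inv, hwt])]
          refine ⟨?_, a, haV, by rw [has, hsm], hat⟩
          rw [← cancel_right D h w hwt]
          exact hVmul _ h hmV hh (by rw [D.t_mul w (D.inv h) (by rw [D.s_inv, hwt]), D.t_inv])
      
        rw [(hmem f).mp hf _ hm, mul_zero]
      · rw [if_neg hwt]
    have honep : deltaFun (G := G) k (D.one p) ∈ S := by
      rw [hmem]
      intro w hw
      by_cases hwv : w = D.one p
      · exfalso
        apply hw
        rw [hwv]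
        exact ⟨hVone p, D.one p, hVone p, rfl, D.t_one p⟩
      · exact if_neg hwv
    rcases hS S h1 h2 h3 h4 with hbot | hall
    · exfalso
      rw [hbot, Submodule.mem_bot] at honep
      have := congrFun honep (D.one p)
      simp [deltaFun] at this
    · have hq : deltaFun (G := G) k (D.one q) ∈ S := by
        apply hall
        intro w hw
        apply if_neg
        intro hwv
        exact hw (hwv ▸ hVone q)
      have hqA : D.one q ∈ A := by
        by_contra hqA
        have := (hmem _).mp hq (D.one q) hqA
        simp [deltaFun] at this
      obtain ⟨-, a, haV, has, hat⟩ := hqA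
      rw [D.s_one] at has
      exact ⟨D.inv a, hVinv a haV, by rw [D.s_inv, hat], by rw [D.t_inv, has]⟩
  · -- connected ⟹ simple
    intro hconn S hsupp hhom hLs hRs
    by_cases hz : ∀ f ∈ S, f = 0
    · left; exact (Submodule.eq_bot_iff S).mpr hz
    · right
      push_neg at hz
      obtain ⟨f0, hf0S, hf0⟩ := hz
      -- extract a delta function in S
      have hdelta : ∀ f ∈ S, ∀ v : G, f v ≠ 0 → deltaFun (G := G) k v ∈ S := by
        intro f hf v hv
        have h2 := hhom f hf v
        have h3 : ((f v)⁻¹ • (fun w => if w = v then f v else 0) : G → k)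
            = deltaFun (G := G) k v := by
          funext w
          simp only [Pi.smul_apply, smul_eq_mul, deltaFun]
          by_cases h : w = v
          · rw [if_pos h, if_pos h, inv_mul_cancel₀ hv]
          · rw [if_neg h, if_neg h, mul_zero]
        rw [← h3]
        exact S.smul_mem _ h2
      have hstepL : ∀ v : G, deltaFun (G := G) k v ∈ S → ∀ g ∈ Vs,
          D.t g = D.s v → deltaFun (G := G) k (D.mul g v) ∈ S := by
        intro v hv g hg hgv
        have := hLs _ hv g hg
        rw [leftAct_delta D ψ g v hgv] at this
        have h2 := S.smul_mem ((ψ g v : k)⁻¹) this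
        rwa [smul_smul, inv_mul_cancel₀ (Units.ne_zero (ψ g v)), one_smul] at h2
      have hstepR : ∀ v : G, deltaFun (G := G) k v ∈ S → ∀ h ∈ Vs,
          D.t v = D.s h → deltaFun (G := G) k (D.mul v h) ∈ S := by
        intro v hv h hh hvh
        have := hRs _ hv h hh
        rw [rightAct_delta D ψ h v hvh] at this
        have h2 := S.smul_mem ((ψ v h : k)⁻¹) this
        rwa [smul_smul, inv_mul_cancel₀ (Units.ne_zero (ψ v h)), one_smul] at h2
      obtain ⟨v, hv⟩ : ∃ v : G, f0 v ≠ 0 := by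
        by_contra h
        push_neg at h
        exact hf0 (funext h)
      have hvV : v ∈ Vs := by
        by_contra hvV
        exact hv (hsupp f0 hf0S v hvV)
      have hδv : deltaFun (G := G) k v ∈ S := hdelta f0 hf0S v hv
      have hδone : deltaFun (G := G) k (D.one (D.t v)) ∈ S := by
        have := hstepL v hδv (D.inv v) (hVinv v hvV) (D.t_inv v)
        rwa [D.inv_mul v] at this
      have hall : ∀ u ∈ Vs, deltaFun (G := G) k u ∈ S := by
        intro u hu
        obtain ⟨g, hgV, hgs, hgt⟩ := hconn (D.s u) (D.t v)
        have hδg : deltaFun (G := G) k g ∈ S := by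
          have := hstepL _ hδone g hgV (by rw [D.s_one, hgt])
          have hmg : D.mul g (D.one (D.t v)) = g := by rw [← hgt]; exact D.mul_one g
          rwa [hmg] at this
        have hhV : D.mul (D.inv g) u ∈ Vs :=
          hVmul (D.inv g) u (hVinv g hgV) hu (by rw [D.t_inv, hgs])
        have hcond : D.t g = D.s (D.mul (D.inv g) u) := by
          rw [D.s_mul (D.inv g) u (by rw [D.t_inv, hgs]), D.s_inv]
        have := hstepR g hδg (D.mul (D.inv g) u) hhV hcond
        rwa [cancel_left D g u hgs.symm] at this
      intro f hf
      rw [sum_delta (k := k) f]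
      apply Submodule.sum_mem
      intro u _
      by_cases hu : u ∈ Vs
      · exact S.smul_mem _ (hall u hu)
      · rw [hf u hu, zero_smul]
        exact S.zero_mem
end
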